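/- Under Assumptions 1–3 on the model, let π̄ be the consensus distribution and let m_ij denote the mean first passage time from state i to state j of the Markov chain with transition matrix T. Then for every agent k: π̄_k − 1/n = (1/(2n²)) Σ_{i,j} p_ij α_ij ((1−2ε)π̄_i + π̄_j)(m_ik − m_jk). -/

import Mathlib

/-!
Stationarity `π̄ᵀ (T + D) = π̄ᵀ` gives `π̄ᵀ D = π̄ᵀ (I - T)`, and the fundamental matrix satisfies
`(I - T) Y = I - T^∞`; hence `π̄ᵀ D Y = π̄ᵀ - eᵀ / n`. Each `J_ij - A_ij` has rank one, with
`π̄ᵀ (J_ij - A_ij) = -½ ((1 - 2ε) π̄_i + π̄_j) (e_i - e_j)ᵀ`, and `Y_ik - Y_jk = (m_jk - m_ik) / n`,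
which turns the `k`-th entry of `π̄ᵀ D Y` into the stated sum.

The series defining `Y` converges: `T` is a convex combination of the doubly stochastic matrices
`(1 - γ_ij) A_ij + γ_ij I`, its diagonal is positive and its support contains the strongly
connected meeting graph, so some power `T^m` is entrywise positive, and then Dobrushin's
contraction makes every row of `T^k` approach the uniform distribution geometrically fast.
-/

open Matrix Filter

noncomputable section

/-- the standard basis vector `e_i`. -/
def eVec {n : ℕ} (i : Fin n) : Fin n → ℝ := fun k => if k = i then 1 else 0

/-- `A_{ij} = I − (e_i−e_j)(e_i−e_j)ᵀ/2` : pairwise averaging matrix. -/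
def Amat {n : ℕ} (i j : Fin n) : Matrix (Fin n) (Fin n) ℝ :=
  1 - (2⁻¹ : ℝ) • Matrix.vecMulVec (eVec i - eVec j) (eVec i - eVec j)

/-- `J_{ij} = I − (1−ε) e_i (e_i−e_j)ᵀ` : influence matrix. -/
def Jmat {n : ℕ} (ε : ℝ) (i j : Fin n) : Matrix (Fin n) (Fin n) ℝ :=
  1 - (1 - ε) • Matrix.vecMulVec (eVec i) (eVec i - eVec j)

/-- the social network matrix `T = (1/n) Σ_{i,j} p_ij [(1−γ_ij) A_ij + γ_ij I]`. -/
def socT {n : ℕ} (p γ : Fin n → Fin n → ℝ) : Matrix (Fin n) (Fin n) ℝ :=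
  ((n : ℝ)⁻¹) • ∑ i, ∑ j, p i j •
    ((1 - γ i j) • Amat i j + γ i j • (1 : Matrix (Fin n) (Fin n) ℝ))

/-- the influence matrix `D = (1/n) Σ_{i,j} p_ij α_ij (J_ij − A_ij)`. -/
def infD {n : ℕ} (p α : Fin n → Fin n → ℝ) (ε : ℝ) : Matrix (Fin n) (Fin n) ℝ :=
  ((n : ℝ)⁻¹) • ∑ i, ∑ j, (p i j * α i j) • (Jmat ε i j - Amat i j)

/-- `isPath E i j L` : there is a directed path of length `L` from `i` to `j`. -/
def isPath {n : ℕ} (E : Fin n → Fin n → Prop) (i j : Fin n) (L : ℕ) : Prop :=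
  ∃ f : ℕ → Fin n, f 0 = i ∧ f L = j ∧ ∀ l < L, E (f l) (f (l + 1))

/-- the fundamental matrix `Y = Σ_{k=0}^∞ (T^k − T^∞)` of a doubly stochastic
Markov chain, whose limit matrix `T^∞` has all entries `1/n`. -/
def fundY {n : ℕ} (T : Matrix (Fin n) (Fin n) ℝ) : Matrix (Fin n) (Fin n) ℝ :=
  Matrix.of fun i j => ∑' k : ℕ, ((T ^ k) i j - 1 / n)

/-- the mean first passage time `m_ij = n (Y_jj − Y_ij)` from state `i` to
state `j` of a doubly stochastic Markov chain with transition matrix `T`. -/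
def mfp {n : ℕ} (T : Matrix (Fin n) (Fin n) ℝ) (i j : Fin n) : ℝ :=
  n * (fundY T j j - fundY T i j)

section Stochastic

variable {ι : Type*} [Fintype ι] [DecidableEq ι]

-- Dobrushin's contraction: as `∑ a, w a = 0`, the common part `δ` of the columns of `S` is
-- invisible to `w ᵥ* S`.
theorem sum_abs_vecMul_le_of_sum_eq_zero {S : Matrix ι ι ℝ} (hS : S ∈ rowStochastic ℝ ι)
    {δ : ℝ} (hδ : ∀ a b, δ ≤ S a b) {w : ι → ℝ} (hw : ∑ a, w a = 0) :
    ∑ b, |(w ᵥ* S) b| ≤ (1 - Fintype.card ι * δ) * ∑ a, |w a| := by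
  have hshift : ∀ b, (w ᵥ* S) b = ∑ a, w a * (S a b - δ) := fun b => by
    simp only [vecMul, dotProduct, mul_sub, Finset.sum_sub_distrib, ← Finset.sum_mul, hw,
      zero_mul, sub_zero]
  calc ∑ b, |(w ᵥ* S) b| ≤ ∑ b, ∑ a, |w a| * (S a b - δ) := by
        gcongr with b
        rw [hshift b]
        refine (Finset.abs_sum_le_sum_abs _ _).trans_eq (Finset.sum_congr rfl fun a _ => ?_)
        rw [abs_mul, abs_of_nonneg (sub_nonneg.2 (hδ a b))]
    _ = (1 - Fintype.card ι * δ) * ∑ a, |w a| := by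
        rw [Finset.sum_comm]
        simp_rw [← Finset.mul_sum, Finset.sum_sub_distrib, sum_row_of_mem_rowStochastic hS,
          Finset.sum_const, Finset.card_univ, nsmul_eq_mul, Finset.mul_sum]
        exact Finset.sum_congr rfl fun a _ => by ring

theorem row_sub_const_vecMul {N : Matrix ι ι ℝ} (hN : N ∈ colStochastic ℝ ι)
    (A : Matrix ι ι ℝ) (i : ι) (c : ℝ) :
    (fun a => A i a - c) ᵥ* N = fun b => (A * N) i b - c := by
  ext b
  simp only [vecMul, dotProduct, mul_apply, sub_mul, Finset.sum_sub_distrib, ← Finset.mul_sum,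
    sum_col_of_mem_colStochastic hN, mul_one]

theorem sum_abs_pow_add_apply_sub_inv_card_le {M : Matrix ι ι ℝ}
    (hM : M ∈ doublyStochastic ℝ ι) {l : ℕ} {δ : ℝ} (hδ : ∀ a b, δ ≤ (M ^ l) a b)
    (i : ι) (k : ℕ) :
    ∑ b, |(M ^ (k + l)) i b - (Fintype.card ι : ℝ)⁻¹| ≤
      (1 - Fintype.card ι * δ) * ∑ b, |(M ^ k) i b - (Fintype.card ι : ℝ)⁻¹| := by
  have hcard : (Fintype.card ι : ℝ) ≠ 0 := by
    have : Nonempty ι := ⟨i⟩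
    exact_mod_cast Fintype.card_ne_zero
  obtain ⟨hrow, hcol⟩ := mem_doublyStochastic_iff_mem_rowStochastic_and_mem_colStochastic.1
    ((doublyStochastic ℝ ι).pow_mem hM l)
  have hw : ∑ a, ((M ^ k) i a - (Fintype.card ι : ℝ)⁻¹) = 0 := by
    rw [Finset.sum_sub_distrib, sum_row_of_mem_doublyStochastic
      ((doublyStochastic ℝ ι).pow_mem hM k), Finset.sum_const, Finset.card_univ, nsmul_eq_mul,
      mul_inv_cancel₀ hcard, sub_self]
  calc ∑ b, |(M ^ (k + l)) i b - (Fintype.card ι : ℝ)⁻¹|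
      = ∑ b, |((fun a => (M ^ k) i a - (Fintype.card ι : ℝ)⁻¹) ᵥ* M ^ l) b| := by
        rw [row_sub_const_vecMul hcol, pow_add]
    _ ≤ _ := sum_abs_vecMul_le_of_sum_eq_zero hrow hδ hw

theorem summable_pow_apply_sub_inv_card {M : Matrix ι ι ℝ} (hM : M ∈ doublyStochastic ℝ ι)
    {m : ℕ} (hm : 0 < m) (hpos : ∀ a b, 0 < (M ^ m) a b) (i j : ι) :
    Summable fun k => (M ^ k) i j - (Fintype.card ι : ℝ)⁻¹ := by
  have : Nonempty ι := ⟨i⟩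
  have : NeZero m := ⟨hm.ne'⟩
  set g : ℕ → ℝ := fun k => ∑ b, |(M ^ k) i b - (Fintype.card ι : ℝ)⁻¹|
  obtain ⟨x, hx⟩ := Finite.exists_min fun x : ι × ι => (M ^ m) x.1 x.2
  set δ := (M ^ m) x.1 x.2
  set r := 1 - Fintype.card ι * δ
  have hr0 : 0 ≤ r := by
    have := Finset.sum_le_sum fun b (_ : b ∈ Finset.univ) => hx (x.1, b)
    rw [sum_row_of_mem_doublyStochastic ((doublyStochastic ℝ ι).pow_mem hM m),
      Finset.sum_const, Finset.card_univ, nsmul_eq_mul] at this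
    linarith
  have hr1 : r < 1 := by
    have : (0 : ℝ) < Fintype.card ι := by exact_mod_cast Fintype.card_pos
    nlinarith [hpos x.1 x.2]
  have hanti : Antitone g := antitone_nat_of_succ_le fun k => by
    simpa using sum_abs_pow_add_apply_sub_inv_card_le hM (l := 1) (δ := 0)
      (fun a b => by simpa using nonneg_of_mem_doublyStochastic hM) i k
  have hgeom : ∀ t, g (m * t) ≤ r ^ t * g 0 := fun t => by
    induction t with
    | zero => simp
    | succ t ih =>
      calc g (m * (t + 1)) = g (m * t + m) := by rw [Nat.mul_succ]
        _ ≤ r * g (m * t) :=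
            sum_abs_pow_add_apply_sub_inv_card_le hM (fun a b => hx (a, b)) i (m * t)
        _ ≤ r ^ (t + 1) * g 0 := by rw [pow_succ', mul_assoc]; gcongr
  have hg : Summable g := by
    -- an antitone sequence is summable as soon as its subsequence along `m ℕ` is
    rw [← summable_indicator_mod_iff hanti (0 : ZMod m), ← Nat.cast_zero,
      summable_indicator_mod_iff_summable]
    exact ((summable_geometric_of_lt_one hr0 hr1).mul_right (g 0)).of_nonneg_of_le
      (fun t => Finset.sum_nonneg fun b _ => abs_nonneg _) hgeom
  refine hg.of_norm_bounded fun k => ?_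
  exact Finset.single_le_sum (f := fun b => |(M ^ k) i b - (Fintype.card ι : ℝ)⁻¹|)
    (fun b _ => abs_nonneg _) (Finset.mem_univ j)

theorem pow_succ_apply_pos {M : Matrix ι ι ℝ}
    (hM : M ∈ rowStochastic ℝ ι) {L : ℕ} {i c j : ι} (hic : 0 < (M ^ L) i c)
    (hcj : 0 < M c j) : 0 < (M ^ (L + 1)) i j := by
  rw [pow_succ, mul_apply]
  exact Finset.sum_pos' (fun d _ => mul_nonneg
      (nonneg_of_mem_rowStochastic ((rowStochastic ℝ ι).pow_mem hM L))
      (nonneg_of_mem_rowStochastic hM))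
    ⟨c, Finset.mem_univ c, mul_pos hic hcj⟩

theorem pow_apply_pos_of_le {M : Matrix ι ι ℝ}
    (hM : M ∈ rowStochastic ℝ ι) (hdiag : ∀ a, 0 < M a a) {L k : ℕ} (hLk : L ≤ k)
    {i j : ι} (h : 0 < (M ^ L) i j) : 0 < (M ^ k) i j := by
  induction k, hLk using Nat.le_induction with
  | base => exact h
  | succ k _ ih => exact pow_succ_apply_pos hM ih (hdiag j)

end Stochastic

section Paths

variable {n : ℕ}

theorem pow_apply_pos_of_isPath {M : Matrix (Fin n) (Fin n) ℝ} (hM : M ∈ rowStochastic ℝ (Fin n))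
    {E : Fin n → Fin n → Prop} (hE : ∀ a b, E a b → 0 < M a b) {i : Fin n} :
    ∀ {j : Fin n} {L : ℕ}, isPath E i j L → 0 < (M ^ L) i j
  | j, 0, ⟨f, hf0, hfL, _⟩ => by simp [← hf0, ← hfL]
  | j, L + 1, ⟨f, hf0, hfL, hstep⟩ =>
    pow_succ_apply_pos hM
      (pow_apply_pos_of_isPath hM hE ⟨f, hf0, rfl, fun l hl => hstep l (by omega)⟩)
      (hfL ▸ hE _ _ (hstep L L.lt_succ_self))

theorem exists_pow_pos_of_isPath {M : Matrix (Fin n) (Fin n) ℝ}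
    (hM : M ∈ rowStochastic ℝ (Fin n)) (hdiag : ∀ a, 0 < M a a) {E : Fin n → Fin n → Prop}
    (hE : ∀ a b, E a b → 0 < M a b) (hconn : ∀ i j, ∃ L, isPath E i j L) :
    ∃ m, 0 < m ∧ ∀ i j, 0 < (M ^ m) i j := by
  choose L hL using hconn
  refine ⟨Finset.univ.sup (fun x : Fin n × Fin n => L x.1 x.2) + 1, Nat.succ_pos _,
    fun i j => pow_apply_pos_of_le hM hdiag ?_ (pow_apply_pos_of_isPath hM hE (hL i j))⟩
  exact (Finset.le_sup (f := fun x : Fin n × Fin n => L x.1 x.2) (Finset.mem_univ (i, j))).trans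
    (Nat.le_succ _)

end Paths

section Fundamental

variable {n : ℕ}

theorem mul_fundY_apply {M : Matrix (Fin n) (Fin n) ℝ} (hrow : ∀ a, ∑ b, M a b = 1)
    (hsum : ∀ a b, Summable fun k => (M ^ k) a b - 1 / n) (j l : Fin n) :
    (M * fundY M) j l = ∑' k, ((M ^ (k + 1)) j l - 1 / n) := by
  have hstep : ∀ k, ∑ c, M j c * ((M ^ k) c l - 1 / n) = (M ^ (k + 1)) j l - 1 / n := fun k => by
    simp only [mul_sub, Finset.sum_sub_distrib, ← Finset.sum_mul, hrow j, one_mul, pow_succ',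
      mul_apply]
  simp only [mul_apply, fundY, of_apply, ← tsum_mul_left]
  rw [← Summable.tsum_finsetSum fun c _ => (hsum c l).mul_left (M j c)]
  simp only [hstep]

theorem fundY_sub_mul_fundY {M : Matrix (Fin n) (Fin n) ℝ} (hrow : ∀ a, ∑ b, M a b = 1)
    (hsum : ∀ a b, Summable fun k => (M ^ k) a b - 1 / n) :
    fundY M - M * fundY M = 1 - of fun _ _ => 1 / (n : ℝ) := by
  ext j l
  rw [Matrix.sub_apply, mul_fundY_apply hrow hsum, fundY, of_apply, (hsum j l).tsum_eq_zero_add]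
  simp

end Fundamental

section Model

variable {n : ℕ}

theorem eVec_eq_single (i : Fin n) : eVec i = Pi.single i 1 := by
  ext k
  simp [eVec, Pi.single_apply]

theorem Amat_eq (i j : Fin n) : Amat i j = (2⁻¹ : ℝ) • (1 + (Equiv.swap i j).permMatrix ℝ) := by
  ext a b
  simp only [Amat, eVec, Matrix.sub_apply, Matrix.smul_apply, Matrix.add_apply, vecMulVec_apply,
    Pi.sub_apply, one_apply, PEquiv.toMatrix_toPEquiv_apply, Pi.single_apply,
    Equiv.swap_apply_def, smul_eq_mul]
  split_ifs <;> grind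

theorem Amat_mem_doublyStochastic (i j : Fin n) : Amat i j ∈ doublyStochastic ℝ (Fin n) := by
  rw [Amat_eq, smul_add]
  exact convex_doublyStochastic (one_mem _) permMatrix_mem_doublyStochastic
    (by norm_num) (by norm_num) (by norm_num)

theorem two_inv_le_Amat_apply_self (i j a : Fin n) : 2⁻¹ ≤ Amat i j a a := by
  have : (0 : ℝ) ≤ (Equiv.swap i j).permMatrix ℝ a a :=
    nonneg_of_mem_doublyStochastic permMatrix_mem_doublyStochastic
  rw [Amat_eq, Matrix.smul_apply, Matrix.add_apply, one_apply_eq, smul_eq_mul]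
  linarith

theorem two_inv_le_Amat_apply (i j : Fin n) : 2⁻¹ ≤ Amat i j i j := by
  have : (0 : ℝ) ≤ (1 : Matrix (Fin n) (Fin n) ℝ) i j :=
    nonneg_of_mem_doublyStochastic (one_mem _)
  rw [Amat_eq, Matrix.smul_apply, Matrix.add_apply, smul_eq_mul]
  simp only [PEquiv.toMatrix_toPEquiv_apply, Equiv.swap_apply_left, Pi.single_eq_same]
  linarith

def meetingMatrix (γ : ℝ) (i j : Fin n) : Matrix (Fin n) (Fin n) ℝ :=
  (1 - γ) • Amat i j + γ • 1

theorem meetingMatrix_mem_doublyStochastic {γ : ℝ} (hγ0 : 0 ≤ γ) (hγ1 : γ ≤ 1) (i j : Fin n) :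
    meetingMatrix γ i j ∈ doublyStochastic ℝ (Fin n) :=
  convex_doublyStochastic (Amat_mem_doublyStochastic i j) (one_mem _) (by linarith) hγ0
    (by ring)

theorem two_inv_le_meetingMatrix_apply_self {γ : ℝ} (hγ0 : 0 ≤ γ) (hγ1 : γ ≤ 1)
    (i j a : Fin n) : 2⁻¹ ≤ meetingMatrix γ i j a a := by
  have := two_inv_le_Amat_apply_self i j a
  simp only [meetingMatrix, Matrix.add_apply, Matrix.smul_apply, one_apply_eq, smul_eq_mul]
  nlinarith

theorem meetingMatrix_apply_pos {γ : ℝ} (hγ0 : 0 ≤ γ) (hγ1 : γ < 1) (i j : Fin n) :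
    0 < meetingMatrix γ i j i j := by
  have := two_inv_le_Amat_apply i j
  have : (0 : ℝ) ≤ (1 : Matrix (Fin n) (Fin n) ℝ) i j :=
    nonneg_of_mem_doublyStochastic (one_mem _)
  simp only [meetingMatrix, Matrix.add_apply, Matrix.smul_apply, smul_eq_mul]
  nlinarith

theorem socT_eq_sum (p γ : Fin n → Fin n → ℝ) :
    socT p γ = ∑ x : Fin n × Fin n,
      ((n : ℝ)⁻¹ * p x.1 x.2) • meetingMatrix (γ x.1 x.2) x.1 x.2 := by
  simp only [socT, meetingMatrix, Fintype.sum_prod_type, Finset.smul_sum, mul_smul]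

theorem sum_inv_mul_meeting_prob {p : Fin n → Fin n → ℝ} (hp_row : ∀ i, ∑ j, p i j = 1)
    [NeZero n] : ∑ x : Fin n × Fin n, (n : ℝ)⁻¹ * p x.1 x.2 = 1 := by
  simp [Fintype.sum_prod_type, ← Finset.mul_sum, hp_row]

section SocialNetwork

variable {p γ : Fin n → Fin n → ℝ} (hp : ∀ i j, 0 ≤ p i j) (hγ0 : ∀ i j, 0 ≤ γ i j)
  (hγ1 : ∀ i j, γ i j ≤ 1)
include hp hγ0 hγ1

theorem socT_mem_doublyStochastic (hp_row : ∀ i, ∑ j, p i j = 1) [NeZero n] :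
    socT p γ ∈ doublyStochastic ℝ (Fin n) := by
  rw [socT_eq_sum]
  exact convex_doublyStochastic.sum_mem (fun x _ => by have := hp x.1 x.2; positivity)
    (sum_inv_mul_meeting_prob hp_row)
    fun x _ => meetingMatrix_mem_doublyStochastic (hγ0 x.1 x.2) (hγ1 x.1 x.2) x.1 x.2

theorem socT_apply_self_pos (hp_row : ∀ i, ∑ j, p i j = 1) [NeZero n] (a : Fin n) :
    0 < socT p γ a a := by
  rw [socT_eq_sum, Matrix.sum_apply]
  calc (0 : ℝ) < ∑ x : Fin n × Fin n, (n : ℝ)⁻¹ * p x.1 x.2 * 2⁻¹ := by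
        rw [← Finset.sum_mul, sum_inv_mul_meeting_prob hp_row]; norm_num
    _ ≤ _ := by
        gcongr with x
        rw [Matrix.smul_apply, smul_eq_mul]
        have := hp x.1 x.2
        gcongr
        exact two_inv_le_meetingMatrix_apply_self (hγ0 x.1 x.2) (hγ1 x.1 x.2) x.1 x.2 a

theorem socT_apply_pos {a b : Fin n} (hpab : 0 < p a b) (hγab : γ a b < 1) :
    0 < socT p γ a b := by
  rw [socT_eq_sum, Matrix.sum_apply]
  refine lt_of_lt_of_le ?_ (Finset.single_le_sum (f := fun x : Fin n × Fin n =>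
    (((n : ℝ)⁻¹ * p x.1 x.2) • meetingMatrix (γ x.1 x.2) x.1 x.2) a b) (fun x _ => ?_)
    (Finset.mem_univ (a, b)))
  · have : (0 : ℝ) < n := Nat.cast_pos.2 (Fin.pos a)
    exact mul_pos (by positivity) (meetingMatrix_apply_pos (hγ0 a b) hγab a b)
  · exact mul_nonneg (by have := hp x.1 x.2; positivity) (nonneg_of_mem_doublyStochastic
      (meetingMatrix_mem_doublyStochastic (hγ0 x.1 x.2) (hγ1 x.1 x.2) x.1 x.2))

end SocialNetwork

end Model

section Consensus

variable {n : ℕ}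

theorem sub_inv_eq_vecMul_fundY {T D : Matrix (Fin n) (Fin n) ℝ} (hrow : ∀ a, ∑ b, T a b = 1)
    (hsum : ∀ a b, Summable fun k => (T ^ k) a b - 1 / n) {π : Fin n → ℝ}
    (hπ_sum : ∑ i, π i = 1) (hπ : π ᵥ* (T + D) = π) (k : Fin n) :
    π k - 1 / n = (π ᵥ* D ᵥ* fundY T) k := by
  have hD : π ᵥ* D = π ᵥ* (1 - T) := by
    rw [vecMul_sub, vecMul_one]
    nth_rw 2 [← hπ]
    rw [vecMul_add, add_sub_cancel_left]
  rw [hD, vecMul_vecMul, Matrix.sub_mul, Matrix.one_mul, fundY_sub_mul_fundY hrow hsum,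
    vecMul_sub, vecMul_one]
  simp [vecMul, dotProduct, ← Finset.sum_mul, hπ_sum]

theorem eVec_sub_eVec_vecMul (Y : Matrix (Fin n) (Fin n) ℝ) (i j : Fin n) :
    (eVec i - eVec j) ᵥ* Y = Y i - Y j := by
  rw [sub_vecMul, eVec_eq_single, eVec_eq_single, single_one_vecMul, single_one_vecMul]
  rfl

theorem vecMul_Jmat_sub_Amat (π : Fin n → ℝ) (ε : ℝ) (i j : Fin n) :
    π ᵥ* (Jmat ε i j - Amat i j) =
      (-2⁻¹ * ((1 - 2 * ε) * π i + π j)) • (eVec i - eVec j) := by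
  have : Jmat ε i j - Amat i j =
      vecMulVec ((2⁻¹ : ℝ) • (eVec i - eVec j) - (1 - ε) • eVec i) (eVec i - eVec j) := by
    ext a b
    simp only [Jmat, Amat, Matrix.sub_apply, Matrix.smul_apply, vecMulVec_apply, Pi.sub_apply,
      Pi.smul_apply, smul_eq_mul]
    ring
  rw [this, vecMul_vecMulVec]
  congr 1
  simp only [eVec_eq_single, dotProduct_sub, dotProduct_smul, dotProduct_single, mul_one,
    smul_eq_mul]
  ring

theorem vecMul_infD (p α : Fin n → Fin n → ℝ) (ε : ℝ) (π : Fin n → ℝ) :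
    π ᵥ* infD p α ε = ∑ i, ∑ j,
      ((n : ℝ)⁻¹ * (p i j * α i j) * (-2⁻¹ * ((1 - 2 * ε) * π i + π j))) •
        (eVec i - eVec j) := by
  simp only [infD, vecMul_smul, vecMul_sum, vecMul_Jmat_sub_Amat, smul_smul, Finset.smul_sum]

end Consensus

theorem stmt_8_general {n : ℕ}
    (p α β γ : Fin n → Fin n → ℝ)
    (hp_nonneg : ∀ i j, 0 ≤ p i j) (hp_row : ∀ i, ∑ j, p i j = 1)
    (hconn : ∀ i j : Fin n, ∃ L, isPath (fun a b => 0 < p a b) i j L)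
    (hα : ∀ i j, 0 ≤ α i j) (hβ : ∀ i j, 0 ≤ β i j) (hγ : ∀ i j, 0 ≤ γ i j)
    (habg : ∀ i j, α i j + β i j + γ i j = 1)
    (hint : ∀ i j, 0 < p i j → 0 < β i j + α i j)
    (ε : ℝ)
    -- π̄ : the consensus distribution
    (πbar : Fin n → ℝ) (hπ_sum : ∑ i, πbar i = 1)
    (hπ_stat : Matrix.vecMul πbar (socT p γ + infD p α ε) = πbar) :
    ∀ k, πbar k - 1 / n =
      (1 / (2 * (n : ℝ) ^ 2)) * ∑ i, ∑ j, p i j * α i j *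
        ((1 - 2 * ε) * πbar i + πbar j) * (mfp (socT p γ) i k - mfp (socT p γ) j k) := by
  intro k
  have : NeZero n := NeZero.of_pos k.pos
  have hγ1 : ∀ i j, γ i j ≤ 1 := fun i j => by linarith [habg i j, hα i j, hβ i j]
  have hT := socT_mem_doublyStochastic hp_nonneg hγ hγ1 hp_row
  obtain ⟨m, hm, hpos⟩ := exists_pow_pos_of_isPath
    (mem_doublyStochastic_iff_mem_rowStochastic_and_mem_colStochastic.1 hT).1
    (socT_apply_self_pos hp_nonneg hγ hγ1 hp_row)
    (fun a b hab => socT_apply_pos hp_nonneg hγ hγ1 hab (by linarith [hint a b hab, habg a b]))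
    hconn
  have hsum : ∀ a b, Summable fun t => (socT p γ ^ t) a b - 1 / n := fun a b => by
    simpa [one_div] using summable_pow_apply_sub_inv_card hT hm hpos a b
  rw [sub_inv_eq_vecMul_fundY (sum_row_of_mem_doublyStochastic hT) hsum hπ_sum hπ_stat,
    vecMul_infD]
  simp only [sum_vecMul, smul_vecMul, eVec_sub_eVec_vecMul, Finset.sum_apply, Pi.smul_apply,
    Pi.sub_apply, smul_eq_mul, Finset.mul_sum, mfp]
  refine Finset.sum_congr rfl fun i _ => Finset.sum_congr rfl fun j _ => ?_
  field_simp
  ring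

/-- Theorem 7(a): under Assumptions 1–3, for every agent `k`, the excess
influence is `π̄_k − 1/n = (1/(2n²)) Σ_{i,j} p_ij α_ij ((1−2ε)π̄_i + π̄_j)(m_ik − m_jk)`,
where `m_ij` are the mean first passage times of the chain `T`. -/
theorem stmt_8 {n : ℕ} (hn : 2 ≤ n)
    (p α β γ : Fin n → Fin n → ℝ)
    (hp_diag : ∀ i, p i i = 0) (hp_nonneg : ∀ i j, 0 ≤ p i j) (hp_row : ∀ i, ∑ j, p i j = 1)
    (hconn : ∀ i j : Fin n, ∃ L, isPath (fun a b => 0 < p a b) i j L)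
    (hα : ∀ i j, 0 ≤ α i j) (hβ : ∀ i j, 0 ≤ β i j) (hγ : ∀ i j, 0 ≤ γ i j)
    (habg : ∀ i j, α i j + β i j + γ i j = 1)
    (hint : ∀ i j, 0 < p i j → 0 < β i j + α i j)
    (ε : ℝ) (hε0 : 0 < ε) (hε : ε ≤ 1 / 2)
    -- π̄ : the consensus distribution
    (πbar : Fin n → ℝ) (hπ_nonneg : ∀ i, 0 ≤ πbar i) (hπ_sum : ∑ i, πbar i = 1)
    (hπ_stat : Matrix.vecMul πbar (socT p γ + infD p α ε) = πbar) :
    ∀ k, πbar k - 1 / n =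
      (1 / (2 * (n : ℝ) ^ 2)) * ∑ i, ∑ j, p i j * α i j *
        ((1 - 2 * ε) * πbar i + πbar j) * (mfp (socT p γ) i k - mfp (socT p γ) j k) :=
  stmt_8_general p α β γ hp_nonneg hp_row hconn hα hβ hγ habg hint ε πbar hπ_sum hπ_stat
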